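/- Let n ≥ 1, m ≥ 1 be integers and q ∈ ℂ with q ≠ 0 and q^j ≠ 1 for all 1 ≤ j ≤ n-1. With T_q the n×n lower-triangular Toeplitz matrix with entries 1/(q;q)_{i-j} for i ≥ j, D_r the diagonal matrix with diagonal entries r^i, and S the lower shift matrix, we have T_q D_{q^{-m}} T_{q^{-1}} D_{q^m} = I + Σ_{j=1}^{m-1} ((q^{1-m};q)_j / (q;q)_j) S^j. -/

import Mathlib

noncomputable def qPoch (z q : ℂ) (n : ℕ) : ℂ := ∏ i ∈ Finset.range n, (1 - z * q ^ i)

/-!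
Every matrix in sight is a lower-triangular Toeplitz matrix `lowerToeplitz a`; these multiply by
convolving their symbols, and conjugation by `diagonal (r ^ i)` multiplies the symbol by `r ^ d`.
Since `(q⁻¹; q⁻¹)_l = (-1)^l q^(-C(l+1, 2)) (q; q)_l`, the symbol of the left-hand side is
`∑_l (-1)^l q^C(l, 2) z^l / ((q; q)_l (q; q)_(d-l))` with `z = q^(1-m)`, which the `q`-binomial
theorem sums to `(z; q)_d / (q; q)_d`. This terminates: it vanishes for `d ≥ m` since
`z q^(m-1) = 1`.
-/

open Finset Matrix

@[simp]
lemma qPoch_zero (z q : ℂ) : qPoch z q 0 = 1 := prod_range_zero _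

lemma qPoch_succ (z q : ℂ) (d : ℕ) : qPoch z q (d + 1) = qPoch z q d * (1 - z * q ^ d) :=
  prod_range_succ _ _

lemma qPoch_succ' (z q : ℂ) (d : ℕ) : qPoch z q (d + 1) = (1 - z) * qPoch (z * q) q d := by
  simp only [qPoch, prod_range_succ', pow_zero, mul_one, pow_succ', mul_assoc, mul_comm]

lemma qPoch_eq_zero_iff {z q : ℂ} {d : ℕ} : qPoch z q d = 0 ↔ ∃ i < d, z * q ^ i = 1 := by
  rw [qPoch, prod_eq_zero_iff]
  simp only [mem_range, sub_eq_zero, eq_comm (a := (1 : ℂ))]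

lemma qPoch_inv_inv {q : ℂ} (hq : q ≠ 0) (d : ℕ) :
    qPoch q⁻¹ q⁻¹ d = (-1) ^ d * (q ^ (d + 1).choose 2)⁻¹ * qPoch q q d := by
  induction d with
  | zero => simp
  | succ d ih =>
    rw [qPoch_succ, qPoch_succ, ih, Nat.choose_succ_succ' (d + 1), Nat.choose_one_right, inv_pow,
      ← mul_inv, ← pow_succ', pow_add]
    field_simp
    ring

section qBinom

variable {R : Type*} [CommSemiring R]

/-- Gaussian binomial coefficients, through the `q`-Pascal rule. -/
def qBinom (q : R) : ℕ → ℕ → R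
  | _, 0 => 1
  | 0, _ + 1 => 0
  | d + 1, l + 1 => qBinom q d l + q ^ (l + 1) * qBinom q d (l + 1)

@[simp]
lemma qBinom_zero_right (q : R) (d : ℕ) : qBinom q d 0 = 1 := by cases d <;> rfl

lemma qBinom_succ_succ (q : R) (d l : ℕ) :
    qBinom q (d + 1) (l + 1) = qBinom q d l + q ^ (l + 1) * qBinom q d (l + 1) := rfl

lemma qBinom_eq_zero_of_lt (q : R) {d l : ℕ} (h : d < l) : qBinom q d l = 0 := by
  induction d generalizing l with
  | zero => obtain ⟨l, rfl⟩ := Nat.exists_eq_add_of_lt h; rfl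
  | succ d ih =>
    obtain ⟨l, rfl⟩ := Nat.exists_eq_add_of_lt h
    rw [qBinom_succ_succ, ih (by omega), ih (by omega)]
    simp

end qBinom

theorem qPoch_eq_sum_qBinom (z q : ℂ) (d : ℕ) :
    qPoch z q d = ∑ l ∈ range (d + 1), qBinom q d l * ((-1) ^ l * q ^ l.choose 2 * z ^ l) := by
  induction d generalizing z with
  | zero => simp
  | succ d ih =>
    set t : ℕ → ℂ := fun l => (-1) ^ l * q ^ l.choose 2 * z ^ l
    have ht_succ (l : ℕ) : t (l + 1) = -z * (q ^ l * t l) := by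
      simp only [t, Nat.choose_succ_succ', Nat.choose_one_right]
      ring
    have ht_mul (l : ℕ) : q ^ l * t l = (-1) ^ l * q ^ l.choose 2 * (z * q) ^ l := by
      simp only [t]
      ring
    have hpascal : ∑ l ∈ range (d + 1), q ^ (l + 1) * qBinom q d (l + 1) * t (l + 1) + t 0 =
        ∑ l ∈ range (d + 1), qBinom q d l * (q ^ l * t l) := by
      have hshift := sum_range_succ' (fun l => q ^ l * qBinom q d l * t l) (d + 1)
      rw [pow_zero, qBinom_zero_right, one_mul, one_mul] at hshift
      rw [← hshift, sum_range_succ, qBinom_eq_zero_of_lt q (Nat.lt_succ_self d), mul_zero,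
        zero_mul, add_zero]
      exact sum_congr rfl fun l _ => by ring
    calc qPoch z q (d + 1)
        = (1 - z) * ∑ l ∈ range (d + 1), qBinom q d l * (q ^ l * t l) := by
          simp only [qPoch_succ', ih, ht_mul]
      _ = ∑ l ∈ range (d + 1), qBinom q d l * t (l + 1) +
            (∑ l ∈ range (d + 1), q ^ (l + 1) * qBinom q d (l + 1) * t (l + 1) + t 0) := by
          rw [hpascal, ← sum_add_distrib, mul_sum]
          exact sum_congr rfl fun l _ => by rw [ht_succ]; ring
      _ = ∑ l ∈ range (d + 2), qBinom q (d + 1) l * t l := by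
          rw [sum_range_succ' _ (d + 1)]
          simp only [qBinom_succ_succ, qBinom_zero_right, add_mul, sum_add_distrib, one_mul]
          ring

theorem qBinom_mul_qPoch_mul_qPoch (q : ℂ) {d l : ℕ} (h : l ≤ d) :
    qBinom q d l * qPoch q q l * qPoch q q (d - l) = qPoch q q d := by
  induction d generalizing l with
  | zero =>
    obtain rfl : l = 0 := by omega
    simp
  | succ d ih =>
    rcases l with _ | l
    · simp
    have hfirst := ih (show l ≤ d by omega)
    have hsecond : q ^ (l + 1) * qBinom q d (l + 1) * qPoch q q (l + 1) * qPoch q q (d - l) =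
        q ^ (l + 1) * (1 - q ^ (d - l)) * qPoch q q d := by
      rcases (show l < d ∨ l = d by omega) with hl | rfl
      · obtain ⟨e, he⟩ : ∃ e, d - l = e + 1 := ⟨d - (l + 1), by omega⟩
        rw [he, qPoch_succ q q e, ← ih (show l + 1 ≤ d by omega), show d - (l + 1) = e by omega]
        ring
      · simp [qBinom_eq_zero_of_lt q (Nat.lt_succ_self l)]
    have hpow : q ^ (l + 1) * q ^ (d - l) = q ^ (d + 1) := by rw [← pow_add]; congr 1; omega
    have hPl := qPoch_succ q q l
    have hPd := qPoch_succ q q d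
    rw [← pow_succ'] at hPl hPd
    rw [qBinom_succ_succ, Nat.add_sub_add_right]
    linear_combination (1 - q ^ (l + 1)) * hfirst + hsecond - qPoch q q d * hpow +
      qBinom q d l * qPoch q q (d - l) * hPl - hPd

theorem sum_div_qPoch_mul_qPoch (z q : ℂ) {d : ℕ} (hd : qPoch q q d ≠ 0) :
    ∑ l ∈ range (d + 1), (-1) ^ l * q ^ l.choose 2 * z ^ l / (qPoch q q l * qPoch q q (d - l)) =
      qPoch z q d / qPoch q q d := by
  rw [qPoch_eq_sum_qBinom, sum_div]
  refine sum_congr rfl fun l hl => ?_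
  have hfact := qBinom_mul_qPoch_mul_qPoch q (Nat.lt_succ_iff.mp (mem_range.mp hl))
  rw [← hfact] at hd ⊢
  rw [mul_assoc _ (qPoch q q l),
    mul_div_mul_left _ _ (left_ne_zero_of_mul (left_ne_zero_of_mul hd))]

section lowerToeplitz

variable {R : Type*} {n : ℕ}

def lowerToeplitz [Zero R] (a : ℕ → R) : Matrix (Fin n) (Fin n) R :=
  of fun i j => if (j : ℕ) ≤ i then a (i - j) else 0

lemma lowerToeplitz_apply [Zero R] (a : ℕ → R) (i j : Fin n) :
    lowerToeplitz a i j = if (j : ℕ) ≤ i then a (i - j) else 0 := rfl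

lemma lowerToeplitz_congr [Zero R] {a b : ℕ → R} (h : ∀ d < n, a d = b d) :
    (lowerToeplitz a : Matrix (Fin n) (Fin n) R) = lowerToeplitz b := by
  ext i j
  simp only [lowerToeplitz_apply, h _ (lt_of_le_of_lt (Nat.sub_le _ _) i.isLt)]

lemma lowerToeplitz_add [AddZeroClass R] (a b : ℕ → R) :
    (lowerToeplitz (a + b) : Matrix (Fin n) (Fin n) R) = lowerToeplitz a + lowerToeplitz b := by
  ext i j
  simp only [lowerToeplitz_apply, Matrix.add_apply, Pi.add_apply]
  split_ifs <;> simp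

lemma one_eq_lowerToeplitz [Zero R] [One R] :
    (1 : Matrix (Fin n) (Fin n) R) = lowerToeplitz (Pi.single 0 1) := by
  ext i j
  simp only [one_apply, lowerToeplitz_apply, Fin.ext_iff]
  split_ifs <;> simp_all [Pi.single_apply]; omega

lemma lowerToeplitz_mul [Semiring R] (a b : ℕ → R) :
    (lowerToeplitz a * lowerToeplitz b : Matrix (Fin n) (Fin n) R) =
      lowerToeplitz fun d => ∑ l ∈ range (d + 1), a (d - l) * b l := by
  ext i k
  simp only [mul_apply, lowerToeplitz_apply]
  rw [Fin.sum_univ_eq_sum_range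
    (fun j => (if j ≤ i then a (i - j) else 0) * if (k : ℕ) ≤ j then b (j - k) else 0)]
  split_ifs with hki
  · have hsub : Ico (k : ℕ) (i + 1) ⊆ range n := fun j hj => by
      simp only [mem_Ico, mem_range] at hj ⊢; omega
    rw [← sum_subset hsub fun j _ hj => ?_, sum_Ico_eq_sum_range, Nat.sub_add_comm hki]
    · refine sum_congr rfl fun l hl => ?_
      rw [mem_range] at hl
      rw [if_pos (by omega), if_pos (by omega), Nat.add_sub_cancel_left, Nat.sub_sub]
    · rw [mem_Ico, not_and_or, not_le, not_lt] at hj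
      rcases hj with hj | hj
      · rw [if_neg (show ¬(k : ℕ) ≤ j by omega), mul_zero]
      · rw [if_neg (show ¬j ≤ (i : ℕ) by omega), zero_mul]
  · refine sum_eq_zero fun j _ => ?_
    split_ifs <;> first | omega | simp

lemma diagonal_pow_mul_lowerToeplitz_mul_diagonal_pow [CommSemiring R] {r s : R} (hrs : r * s = 1)
    (b : ℕ → R) :
    diagonal (fun i : Fin n => r ^ (i : ℕ)) * lowerToeplitz b *
        diagonal (fun i : Fin n => s ^ (i : ℕ)) =
      lowerToeplitz fun d => r ^ d * b d := by
  ext i j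
  simp only [mul_diagonal, diagonal_mul, lowerToeplitz_apply]
  split_ifs with hji
  · calc r ^ (i : ℕ) * b (i - j) * s ^ (j : ℕ)
        = r ^ ((i : ℕ) - j) * b (i - j) * (r * s) ^ (j : ℕ) := by
          rw [← pow_mul_pow_sub r hji, mul_pow]; ring
      _ = r ^ ((i : ℕ) - j) * b (i - j) := by rw [hrs, one_pow, mul_one]
  · simp

lemma sum_smul_lowerToeplitz_single [Semiring R] (s : Finset ℕ) (c : ℕ → R) :
    ∑ j ∈ s, c j • (lowerToeplitz (Pi.single j 1) : Matrix (Fin n) (Fin n) R) =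
      lowerToeplitz fun d => if d ∈ s then c d else 0 := by
  ext i k
  simp only [Matrix.sum_apply, Matrix.smul_apply, lowerToeplitz_apply, smul_eq_mul]
  by_cases hki : (k : ℕ) ≤ i <;> simp [hki, Pi.single_apply]

lemma pow_shift_eq_lowerToeplitz [Semiring R] {S : Matrix (Fin n) (Fin n) R}
    (hS : ∀ i j : Fin n, S i j = if (i : ℕ) = j + 1 then 1 else 0) (p : ℕ) :
    S ^ p = lowerToeplitz (Pi.single p 1) := by
  have hS' : S = lowerToeplitz (Pi.single 1 1) := by
    ext i j
    rw [hS, lowerToeplitz_apply, Pi.single_apply]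
    split_ifs <;> first | rfl | omega
  induction p with
  | zero => exact one_eq_lowerToeplitz
  | succ p ih =>
    rw [pow_succ, ih, hS', lowerToeplitz_mul]
    congr 1
    ext d
    simp only [Pi.single_apply, mul_ite, mul_one, mul_zero, sum_ite_eq', mem_range]
    split_ifs <;> first | rfl | omega

end lowerToeplitz

theorem sum_inv_qPoch_mul_zpow_mul_inv_qPoch_inv {q : ℂ} (hq : q ≠ 0) (m : ℤ) {d : ℕ}
    (hd : qPoch q q d ≠ 0) :
    ∑ l ∈ range (d + 1), 1 / qPoch q q (d - l) * ((q ^ (-m)) ^ l * (1 / qPoch q⁻¹ q⁻¹ l)) =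
      qPoch (q ^ (1 - m)) q d / qPoch q q d := by
  rw [← sum_div_qPoch_mul_qPoch _ _ hd]
  refine sum_congr rfl fun l _ => ?_
  have hsign : ((-1 : ℂ) ^ l)⁻¹ = (-1) ^ l := by rw [← inv_pow, inv_neg, inv_one]
  rw [qPoch_inv_inv hq, Nat.choose_succ_succ', Nat.choose_one_right, zpow_sub₀ hq,
    _root_.zpow_neg, zpow_one]
  simp only [one_div, mul_inv, hsign, inv_inv]
  field_simp
  ring

lemma qPoch_zpow_one_sub_eq_zero {q : ℂ} (hq : q ≠ 0) {m d : ℕ} (hm : 1 ≤ m) (hmd : m ≤ d) :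
    qPoch (q ^ (1 - (m : ℤ))) q d = 0 := by
  refine qPoch_eq_zero_iff.mpr ⟨m - 1, by omega, ?_⟩
  rw [← zpow_natCast, ← zpow_add₀ hq, Nat.cast_sub hm]
  simp

theorem stmt9_general (n m : ℕ) (hm : 1 ≤ m) (q : ℂ) (hq0 : q ≠ 0)
    (hq : ∀ j : ℕ, 1 ≤ j → j ≤ n - 1 → q ^ j ≠ 1)
    (T T' S : Matrix (Fin n) (Fin n) ℂ)
    (hT : ∀ i j : Fin n, T i j =
      if (j : ℕ) ≤ (i : ℕ) then 1 / qPoch q q ((i : ℕ) - (j : ℕ)) else 0)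
    (hT' : ∀ i j : Fin n, T' i j =
      if (j : ℕ) ≤ (i : ℕ) then 1 / qPoch q⁻¹ q⁻¹ ((i : ℕ) - (j : ℕ)) else 0)
    (hS : ∀ i j : Fin n, S i j = if (i : ℕ) = (j : ℕ) + 1 then 1 else 0) :
    T * (Matrix.diagonal fun i : Fin n => (q ^ (-(m : ℤ))) ^ (i : ℕ)) * T' *
      (Matrix.diagonal fun i : Fin n => (q ^ (m : ℤ)) ^ (i : ℕ)) =
      1 + ∑ j ∈ Finset.Icc 1 (m - 1),
        (qPoch (q ^ ((1 : ℤ) - m)) q j / qPoch q q j) • S ^ j := by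
  obtain rfl : T = lowerToeplitz fun d => 1 / qPoch q q d := Matrix.ext hT
  obtain rfl : T' = lowerToeplitz fun d => 1 / qPoch q⁻¹ q⁻¹ d := Matrix.ext hT'
  have hconj : q ^ (-(m : ℤ)) * q ^ (m : ℤ) = 1 := by
    rw [_root_.zpow_neg, inv_mul_cancel₀ (zpow_ne_zero _ hq0)]
  rw [Matrix.mul_assoc _ (diagonal _), Matrix.mul_assoc _ (diagonal _ * _),
    diagonal_pow_mul_lowerToeplitz_mul_diagonal_pow hconj, lowerToeplitz_mul,
    funext (pow_shift_eq_lowerToeplitz hS), sum_smul_lowerToeplitz_single, one_eq_lowerToeplitz,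
    ← lowerToeplitz_add]
  refine lowerToeplitz_congr fun d hdn => ?_
  have hd : qPoch q q d ≠ 0 := fun h => by
    obtain ⟨i, hi, hqi⟩ := qPoch_eq_zero_iff.mp h
    exact hq (i + 1) (by omega) (by omega) (by rwa [pow_succ'])
  rw [sum_inv_qPoch_mul_zpow_mul_inv_qPoch_inv hq0 _ hd]
  rcases Nat.eq_zero_or_pos d with rfl | hd0
  · simp
  rcases lt_or_ge d m with hdm | hdm
  · simp [hd0.ne', Nat.le_sub_one_of_lt hdm]
  · simp [hd0.ne', qPoch_zpow_one_sub_eq_zero hq0 hm hdm]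

theorem stmt9 (n m : ℕ) (hn : 1 ≤ n) (hm : 1 ≤ m) (q : ℂ) (hq0 : q ≠ 0)
    (hq : ∀ j : ℕ, 1 ≤ j → j ≤ n - 1 → q ^ j ≠ 1)
    (T T' S : Matrix (Fin n) (Fin n) ℂ)
    (hT : ∀ i j : Fin n, T i j =
      if (j : ℕ) ≤ (i : ℕ) then 1 / qPoch q q ((i : ℕ) - (j : ℕ)) else 0)
    (hT' : ∀ i j : Fin n, T' i j =
      if (j : ℕ) ≤ (i : ℕ) then 1 / qPoch q⁻¹ q⁻¹ ((i : ℕ) - (j : ℕ)) else 0)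
    (hS : ∀ i j : Fin n, S i j = if (i : ℕ) = (j : ℕ) + 1 then 1 else 0) :
    T * (Matrix.diagonal fun i : Fin n => (q ^ (-(m : ℤ))) ^ (i : ℕ)) * T' *
      (Matrix.diagonal fun i : Fin n => (q ^ (m : ℤ)) ^ (i : ℕ)) =
      1 + ∑ j ∈ Finset.Icc 1 (m - 1),
        (qPoch (q ^ ((1 : ℤ) - m)) q j / qPoch q q j) • S ^ j :=
  stmt9_general n m hm q hq0 hq T T' S hT hT' hS
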